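/- arXiv:2403.19397 — 2 statements merged into one kernel-verified Lean document; each statement's English description precedes it below -/
import Mathlib

section
/- Define f̃ = min{ #J : J ⊆ {1,...,s}, J ∩ I_σ ≠ ∅ for all σ ∈ Σ_max }. Then f̃ = min{ ∑_{i=1}^s e_i : (e_1,...,e_s) ≠ 0, μ(p^{e_1},...,p^{e_s}) ≠ 0 } for any prime ideal p. -/
/-!
Put `g e = μ (p ^ e₁, …, p ^ eₛ)`. Evaluating the inversion formula at `b = (p ^ eᵢ)`, whose
divisors are the `p ^ c` with `c ≤ e`, shows that `∑_{c ≤ e} g c` is `1` if the support of `e`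
misses some `I_σ` and `0` otherwise. By induction on `e`, `g` then vanishes at every nonzero `e`
whose support misses some `I_σ`; so whenever `g e ≠ 0` the support of `e` is a hitting set of
size at most `∑ eᵢ`. Conversely, for the indicator `χ_J` of a minimal hitting set `J`, every
`0 < c < χ_J` has support inside some `J \ {i}`, which misses some `I_σ`; only `c = 0` and
`c = χ_J` survive in the inversion formula, and `g χ_J = -1`.
-/

open Finset

theorem Nat.sInf_eq_sInf_of_forall_exists_le {A B : Set ℕ} (hBA : ∀ b ∈ B, ∃ a ∈ A, a ≤ b)
    (hAB : A.Nonempty → sInf A ∈ B) : sInf A = sInf B := by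
  rcases A.eq_empty_or_nonempty with rfl | hA
  · have hB : B = ∅ := Set.eq_empty_of_forall_notMem fun b hb => by simpa using hBA b hb
    rw [hB]
  · refine le_antisymm ?_ (Nat.sInf_le (hAB hA))
    obtain ⟨a, ha, hab⟩ := hBA _ (Nat.sInf_mem ⟨_, hAB hA⟩)
    exact (Nat.sInf_le ha).trans hab

section HittingSet

variable {ι : Type*} [DecidableEq ι]

def Finset.IsHittingSet (S : Finset (Finset ι)) (J : Finset ι) : Prop :=
  ∀ σ ∈ S, (J ∩ σ).Nonempty

instance (S : Finset (Finset ι)) (J : Finset ι) : Decidable (IsHittingSet S J) :=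
  inferInstanceAs (Decidable (∀ σ ∈ S, (J ∩ σ).Nonempty))

variable {S : Finset (Finset ι)} {J J' : Finset ι}

theorem Finset.IsHittingSet.mono (h : IsHittingSet S J) (hJ : J ⊆ J') : IsHittingSet S J' :=
  fun σ hσ => (h σ hσ).mono (inter_subset_inter_right hJ)

theorem Finset.IsHittingSet.nonempty (h : IsHittingSet S J) (hS : S.Nonempty) : J.Nonempty := by
  obtain ⟨σ, hσ⟩ := hS
  obtain ⟨i, hi⟩ := h σ hσ
  exact ⟨i, (mem_inter.mp hi).1⟩

theorem Finset.not_isHittingSet_empty (hS : S.Nonempty) : ¬ IsHittingSet S ∅ :=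
  fun h => by simpa using h.nonempty hS

theorem Finset.Nonempty.indicator_ne_zero (hJ : J.Nonempty) :
    (fun i => if i ∈ J then 1 else 0 : ι → ℕ) ≠ 0 := fun h => by
  obtain ⟨i, hi⟩ := hJ
  simpa [hi] using congrFun h i

end HittingSet

section posSupport

variable {ι : Type*} [Fintype ι]

def posSupport (e : ι → ℕ) : Finset ι := univ.filter (e · ≠ 0)

theorem mem_posSupport {e : ι → ℕ} {i : ι} : i ∈ posSupport e ↔ e i ≠ 0 := by
  simp [posSupport]

theorem posSupport_zero : posSupport (0 : ι → ℕ) = ∅ := by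
  simp [posSupport]

theorem posSupport_mono {c e : ι → ℕ} (h : c ≤ e) : posSupport c ⊆ posSupport e :=
  fun i hi => mem_posSupport.mpr fun hei => mem_posSupport.mp hi (Nat.le_zero.mp (hei ▸ h i))

theorem card_posSupport_le_sum (e : ι → ℕ) : (posSupport e).card ≤ ∑ i, e i :=
  calc (posSupport e).card = ∑ _i ∈ posSupport e, 1 := card_eq_sum_ones _
    _ ≤ ∑ i ∈ posSupport e, e i :=
        sum_le_sum fun _ hi => Nat.one_le_iff_ne_zero.mpr (mem_posSupport.mp hi)
    _ ≤ ∑ i, e i := sum_le_sum_of_subset (subset_univ _)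

theorem posSupport_indicator [DecidableEq ι] (J : Finset ι) :
    posSupport (fun i => if i ∈ J then 1 else 0) = J := by
  ext i; by_cases hi : i ∈ J <;> simp [mem_posSupport, hi]

end posSupport

section ExponentVectors

variable {ι : Type*} [Fintype ι] [DecidableEq ι]

theorem Finset.Iic_zero_pi : Iic (0 : ι → ℕ) = {0} := by
  ext c; simp [← bot_eq_zero]

theorem Finset.sum_Iic_eq_apply_zero_add {M : Type*} [AddCommMonoid M] {g : (ι → ℕ) → M}
    {e : ι → ℕ} (he : e ≠ 0) (hvanish : ∀ c < e, c ≠ 0 → g c = 0) :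
    ∑ c ∈ Iic e, g c = g 0 + g e := by
  rw [← sum_pair (Ne.symm he)]
  refine (sum_subset (fun c hc => ?_) fun c hc hc' => hvanish c ?_ ?_).symm
  · rcases mem_insert.mp hc with rfl | hc
    · exact mem_Iic.mpr fun _ => Nat.zero_le _
    · exact mem_Iic.mpr (mem_singleton.mp hc).le
  · exact lt_of_le_of_ne (mem_Iic.mp hc) fun h => hc' (by simp [h])
  · exact fun h => hc' (by simp [h])

def IsHittingMoebius (S : Finset (Finset ι)) (g : (ι → ℕ) → ℤ) : Prop :=
  ∀ e, ∑ c ∈ Iic e, g c = if IsHittingSet S (posSupport e) then 0 else 1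

namespace IsHittingMoebius

variable {S : Finset (Finset ι)} {g : (ι → ℕ) → ℤ}

theorem apply_zero (hg : IsHittingMoebius S g) (hS : S.Nonempty) : g 0 = 1 := by
  simpa [Iic_zero_pi, posSupport_zero, not_isHittingSet_empty hS] using hg 0

theorem apply_eq_zero_of_not_isHittingSet (hg : IsHittingMoebius S g) {e : ι → ℕ} (he : e ≠ 0)
    (hhit : ¬ IsHittingSet S (posSupport e)) : g e = 0 := by
  induction e using WellFoundedLT.induction with
  | _ e ih =>
    have hS : S.Nonempty := by
      by_contra hS
      exact hhit fun σ hσ => absurd ⟨σ, hσ⟩ hS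
    have hsum := hg e
    rw [if_neg hhit, sum_Iic_eq_apply_zero_add he fun c hce hc =>
      ih c hce hc fun h => hhit (h.mono (posSupport_mono hce.le)), hg.apply_zero hS] at hsum
    linarith

theorem apply_indicator_of_minimal (hg : IsHittingMoebius S g) {J : Finset ι} (hS : S.Nonempty)
    (hJ : IsHittingSet S J) (hmin : ∀ i ∈ J, ¬ IsHittingSet S (J.erase i)) :
    g (fun i => if i ∈ J then 1 else 0) = -1 := by
  set χ : ι → ℕ := fun i => if i ∈ J then 1 else 0
  have hvanish : ∀ c < χ, c ≠ 0 → g c = 0 := fun c hcχ hc => by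
    obtain ⟨i, hi⟩ := Function.ne_iff.mp hcχ.ne
    have hci := hcχ.le i
    have hiJ : i ∈ J := by by_contra h; simp [χ, h] at hi hci; omega
    replace hci : c i = 0 := by simp [χ, hiJ] at hi hci; omega
    refine hg.apply_eq_zero_of_not_isHittingSet hc fun hc' => hmin i hiJ (hc'.mono ?_)
    intro j hj
    exact mem_erase.mpr ⟨fun hji => mem_posSupport.mp hj (hji ▸ hci),
      posSupport_indicator J ▸ posSupport_mono hcχ.le hj⟩
  have hsum := hg χ
  rw [posSupport_indicator, if_pos hJ,
    sum_Iic_eq_apply_zero_add ((hJ.nonempty hS).indicator_ne_zero) hvanish,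
    hg.apply_zero hS] at hsum
  linarith

theorem sInf_card_isHittingSet_eq (hg : IsHittingMoebius S g) (hS : S.Nonempty) :
    sInf {N : ℕ | ∃ J : Finset ι, IsHittingSet S J ∧ J.card = N} =
      sInf {N : ℕ | ∃ e : ι → ℕ, e ≠ 0 ∧ g e ≠ 0 ∧ N = ∑ i, e i} := by
  refine Nat.sInf_eq_sInf_of_forall_exists_le ?_ fun hA => ?_
  · rintro _ ⟨e, he, hge, rfl⟩
    refine ⟨_, ⟨posSupport e, ?_, rfl⟩, card_posSupport_le_sum e⟩
    by_contra hhit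
    exact hge (hg.apply_eq_zero_of_not_isHittingSet he hhit)
  · obtain ⟨J, hJ, hJcard⟩ := Nat.sInf_mem hA
    have hmin : ∀ i ∈ J, ¬ IsHittingSet S (J.erase i) := fun i hi hhit =>
      (card_erase_lt_of_mem hi).not_ge (hJcard ▸ Nat.sInf_le ⟨_, hhit, rfl⟩)
    refine ⟨fun i => if i ∈ J then 1 else 0, (hJ.nonempty hS).indicator_ne_zero, ?_, ?_⟩
    · simp [hg.apply_indicator_of_minimal hS hJ hmin]
    · simp [← hJcard]

end IsHittingMoebius

namespace Ideal

theorem sup_prod_pow_eq_top_iff {R : Type*} [CommSemiring R] {p : Ideal R} (hp : p.IsPrime)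
    (S : Finset (Finset ι)) (e : ι → ℕ) :
    S.sup (fun σ => ∏ i ∈ σ, p ^ e i) = ⊤ ↔ ¬ IsHittingSet S (posSupport e) := by
  constructor
  · intro h hhit
    refine hp.ne_top (top_le_iff.mp (h ▸ Finset.sup_le fun σ hσ => ?_))
    obtain ⟨i, hi⟩ := hhit σ hσ
    rw [mem_inter, mem_posSupport] at hi
    exact hp.prod_le.mpr ⟨i, hi.2, pow_le_self hi.1⟩
  · intro hhit
    obtain ⟨σ, hσ, hσe⟩ : ∃ σ ∈ S, ¬ (posSupport e ∩ σ).Nonempty := by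
      simpa [IsHittingSet] using hhit
    have hprod : ∏ i ∈ σ, p ^ e i = ⊤ := by
      rw [← one_eq_top]
      refine prod_eq_one fun i hi => ?_
      rw [not_nonempty_iff_eq_empty, eq_empty_iff_forall_notMem] at hσe
      have hei : e i = 0 := by simpa [mem_posSupport, hi] using hσe i
      rw [hei, pow_zero]
    exact top_le_iff.mp (hprod ▸ le_sup (f := fun σ => ∏ i ∈ σ, p ^ e i) hσ)

variable {R : Type*} [CommRing R] [IsDedekindDomain R] {p : Ideal R}

theorem setOf_pow_le_eq_image (hp : Prime p) (e : ι → ℕ) :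
    {d : ι → Ideal R | ∀ i, p ^ e i ≤ d i} = (Iic e).image fun c i => p ^ c i := by
  ext d
  simp only [Set.mem_ofPred_eq, coe_image, Set.mem_image, mem_coe, mem_Iic]
  constructor
  · intro hd
    have hdiv (i : ι) : ∃ c ≤ e i, d i = p ^ c := by
      obtain ⟨c, hc, hassoc⟩ := (dvd_prime_pow hp (e i)).mp (dvd_iff_le.mpr (hd i))
      exact ⟨c, hc, associated_iff_eq.mp hassoc⟩
    choose c hce hdc using hdiv
    exact ⟨c, hce, funext fun i => (hdc i).symm⟩
  · rintro ⟨c, hce, rfl⟩ i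
    exact pow_le_pow_right (hce i)

theorem isHittingMoebius_apply_pow (hp : p.IsPrime) (hp0 : p ≠ ⊥) {S : Finset (Finset ι)}
    {μ : (ι → Ideal R) → ℤ}
    (hinv : ∀ b : ι → Ideal R, (∀ i, b i ≠ ⊥) →
      (if S.sup (fun σ => ∏ i ∈ σ, b i) = ⊤ then (1 : ℤ) else 0) =
        ∑ᶠ d : ι → Ideal R, Set.indicator {d | ∀ i, b i ≤ d i} μ d) :
    IsHittingMoebius S fun e => μ fun i => p ^ e i := by
  intro e
  have hpP : Prime p := prime_of_isPrime hp0 hp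
  have hpow_inj : Function.Injective fun (c : ι → ℕ) i => p ^ c i := fun _ _ h =>
    funext fun i => pow_injective_of_not_isUnit hpP.not_isUnit hpP.ne_zero (congrFun h i)
  have h := hinv (fun i => p ^ e i) fun i => pow_ne_zero _ hpP.ne_zero
  rw [← finsum_mem_def, setOf_pow_le_eq_image hpP, finsum_mem_coe_finset,
    sum_image fun _ _ _ _ h => hpow_inj h] at h
  simp only [sup_prod_pow_eq_top_iff hp, ite_not] at h
  exact h.symm

end Ideal

end ExponentVectors

theorem stmt_14_general (K : Type*) [Field K] [NumberField K] (s : ℕ)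
    (Smax : Finset (Finset (Fin s))) (hS : Smax.Nonempty)
    (μ : (Fin s → Ideal (NumberField.RingOfIntegers K)) → ℤ)
    (hinv : ∀ b : Fin s → Ideal (NumberField.RingOfIntegers K),
      (∀ i, b i ≠ ⊥) →
      (if Smax.sup (fun σ => ∏ i ∈ σ, b i) = ⊤ then (1 : ℤ) else 0) =
        ∑ᶠ d : Fin s → Ideal (NumberField.RingOfIntegers K),
          Set.indicator {d | ∀ i, b i ≤ d i} μ d)
    (p : Ideal (NumberField.RingOfIntegers K)) (hp : p.IsPrime) (hp0 : p ≠ ⊥) :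
    sInf {N : ℕ | ∃ J : Finset (Fin s),
        (∀ σ ∈ Smax, (J ∩ σ).Nonempty) ∧ J.card = N} =
      sInf {N : ℕ | ∃ e : Fin s → ℕ, e ≠ 0 ∧
        μ (fun i => p ^ e i) ≠ 0 ∧ N = ∑ i, e i} :=
  (Ideal.isHittingMoebius_apply_pow hp hp0 hinv).sInf_card_isHittingSet_eq hS

/-- with `μ` the Möbius-type function on `s`-tuples of nonzero
ideals of `𝓞 K` associated to the family `{I_σ}_{σ ∈ Smax}` of subsets of
`{1,…,s}`, the quantity `f̃ = min{#J : J ∩ I_σ ≠ ∅ ∀σ}` equals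
`min{∑ e_i : e ≠ 0, μ(p^{e_1},…,p^{e_s}) ≠ 0}` for any nonzero prime ideal `p`. -/
theorem stmt_14 (K : Type*) [Field K] [NumberField K] (s : ℕ)
    (Smax : Finset (Finset (Fin s))) (hS : Smax.Nonempty)
    (hSne : ∀ σ ∈ Smax, σ.Nonempty)
    (μ : (Fin s → Ideal (NumberField.RingOfIntegers K)) → ℤ)
    (hmul : ∀ a b : Fin s → Ideal (NumberField.RingOfIntegers K),
      (∏ i, a i) ⊔ (∏ i, b i) = ⊤ → μ (fun i => a i * b i) = μ a * μ b)
    (hinv : ∀ b : Fin s → Ideal (NumberField.RingOfIntegers K),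
      (∀ i, b i ≠ ⊥) →
      (if Smax.sup (fun σ => ∏ i ∈ σ, b i) = ⊤ then (1 : ℤ) else 0) =
        ∑ᶠ d : Fin s → Ideal (NumberField.RingOfIntegers K),
          Set.indicator {d | ∀ i, b i ≤ d i} μ d)
    (p : Ideal (NumberField.RingOfIntegers K)) (hp : p.IsPrime) (hp0 : p ≠ ⊥) :
    sInf {N : ℕ | ∃ J : Finset (Fin s),
        (∀ σ ∈ Smax, (J ∩ σ).Nonempty) ∧ J.card = N} =
      sInf {N : ℕ | ∃ e : Fin s → ℕ, e ≠ 0 ∧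
        μ (fun i => p ^ e i) ≠ 0 ∧ N = ∑ i, e i} :=
  stmt_14_general K s Smax hS μ hinv p hp hp0
end

section
/- Let N be a lattice and Σ a complete smooth fan in N ⊗ ℝ whose rays are grouped as ρ_{i,j} for 1 ≤ i ≤ s, 1 ≤ j ≤ n_i according to the s distinct classes δ_i of the corresponding divisors in Pic(X), where X is the associated smooth proper toric variety. For a maximal cone σ, let I_σ = { i : some ρ_{i,j} ⊄ σ }. Then for each i ∈ I_σ there is exactly one index j_{i,σ} with ρ_{i,j_{i,σ}} ⊄ σ; moreover #I_σ = rank Pic(X), and for i ∉ I_σ all rays ρ_{i,1},...,ρ_{i,n_i} are contained in σ. -/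
/-! The classes of the rays outside `σ` form a basis of `Pic(X) ≅ ℤ^r`, so they are pairwise
distinct: no class index contributes two rays outside `σ`. And a basis of `ℤ^r` has `r`
elements. -/

theorem Sigma.snd_eq_of_injOn_fst {ι : Type*} {β : ι → Type*} {t : Set (Σ i, β i)}
    (h : Set.InjOn Sigma.fst t) {i : ι} {j j' : β i} (hj : ⟨i, j⟩ ∈ t) (hj' : ⟨i, j'⟩ ∈ t) :
    j = j' :=
  eq_of_heq (Sigma.mk.inj (h hj hj' rfl)).2

theorem LinearIndependent.injOn_of_comp {ι κ R M : Type*} [Ring R] [Nontrivial R]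
    [AddCommGroup M] [Module R M] {f : ι → κ} {v : κ → M} {t : Set ι}
    (h : LinearIndependent R (fun x : t => v (f x))) : Set.InjOn f t :=
  Set.injOn_iff_injective.mpr (Function.Injective.of_comp (f := v) h.injective)

/-- Lemma on grouped rays, part (i): the rays of the fan are
indexed by pairs `⟨i,j⟩` with `i` the Picard class of the corresponding divisor
(`n i` rays of class `δ i`), and `Out` is the set of rays not contained in a
fixed maximal cone `σ`. By Cox theory, the classes of the rays outside `σ` form a
`ℤ`-basis of `Pic(X) ≅ ℤ^r`. Then: each class index with a ray outside `σ` has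
exactly one such ray, `#Out = r = rank Pic(X)`, and for the other class indices
all rays lie in `σ`. -/
theorem stmt_15 (s r : ℕ) (n : Fin s → ℕ)
    (δ : Fin s → (Fin r → ℤ))
    (Out : Finset ((i : Fin s) × Fin (n i)))
    (hindep : LinearIndependent ℤ (fun x : Out => δ x.1.1))
    (hspan : Submodule.span ℤ (Set.range (fun x : Out => δ x.1.1)) = ⊤) :
    (∀ i : Fin s, (∃ j, (⟨i, j⟩ : (i : Fin s) × Fin (n i)) ∈ Out) →
      ∃! j, (⟨i, j⟩ : (i : Fin s) × Fin (n i)) ∈ Out) ∧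
    Out.card = r ∧
    (∀ i : Fin s, ¬ (∃ j, (⟨i, j⟩ : (i : Fin s) × Fin (n i)) ∈ Out) →
      ∀ j, (⟨i, j⟩ : (i : Fin s) × Fin (n i)) ∉ Out) := by
  have hfst : Set.InjOn Sigma.fst (Out : Set ((i : Fin s) × Fin (n i))) :=
    hindep.injOn_of_comp
  refine ⟨?_, ?_, fun i hi j hj => hi ⟨j, hj⟩⟩
  · rintro i ⟨j, hj⟩
    exact ⟨j, hj, fun j' hj' => Sigma.snd_eq_of_injOn_fst hfst hj' hj⟩
  · have hrank := finrank_span_eq_card hindep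
    rwa [hspan, finrank_top, Module.finrank_fin_fun, Fintype.card_coe, eq_comm] at hrank
end
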